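/- Let λ(p) = p^{n+1} + v_n p^{n-1} + ⋯ + v₁ + u/(p-w) with u ≠ 0 and pairwise distinct simple critical points r₁,…,r_{n+2}, none equal to w. Then the sum of the residues of the rational function h₁(z) = (λ(z)-λ(r_i))/(λ'(z)(z-r_i)²) over all its finite poles equals the negative of its residue at infinity, and the residue of h₁ at infinity equals -(1-n)/(2(n+1)) minus the residue of h₁ at z = r_i. -/

import Mathlib

/-!
Write `λ = P + u/(z - w)` with `P` monic of degree `n + 1` and put `a = r_i`. Then
`λ' = Q/(z - w)²` and `λ(z) - λ(a) = M(z)/((z - w)(a - w))` for polynomials `Q`, `M` of degree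
`n + 2` with leading coefficients `n + 1` and `a - w`. The critical points are the roots of `Q`,
so `Q = (n + 1) ∏ (z - r_k)`; and `M'(a) = Q(a) = 0`, so `M = (z - a)² S`. Hence
`h₁ = N/D` with `N = (z - w) S` and `D = (a - w) Q`: only simple poles, at the `r_k`, and
`deg D = deg N + 1`. The residues `N(r_k)/D'(r_k)` add up, by Lagrange interpolation, to the
ratio of leading coefficients `1/(n + 1)`, which is also the limit of `z h₁(z)` at infinity.
At `a` the residue is `S(a)/Q'(a) = 1/2`, because `M''(a) = Q'(a)`.
-/

open Finset

/-- `λ(p) = p^{n+1} + v_n p^{n-1} + ⋯ + v₂ p + v₁ + u/(p-w)`. -/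
noncomputable def lam (n : ℕ) (v : ℕ → ℂ) (u w : ℂ) : ℂ → ℂ :=
  fun p => p ^ (n + 1) + (∑ i ∈ Finset.range n, v (i + 1) * p ^ i) + u / (p - w)

/-- Residue of `f` at a simple pole `A`: `lim_{z→A} (z-A) f(z)`. -/
noncomputable def simpleRes (f : ℂ → ℂ) (A : ℂ) : ℂ :=
  Filter.limUnder (nhdsWithin A {A}ᶜ) (fun z => (z - A) * f z)

/-- Residue of `f` at infinity: `-lim_{z→∞} z f(z)` (valid when `f = c/z + O(z⁻²)`). -/
noncomputable def resInf (f : ℂ → ℂ) : ℂ :=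
  - Filter.limUnder (Bornology.cobounded ℂ) (fun z => z * f z)

open Filter Topology Bornology Polynomial Lagrange Set Function

namespace Polynomial

section Field

variable {K : Type*} [Field K]

theorem sq_X_sub_C_dvd_of_isRoot_derivative {p : K[X]} {a : K} (h : p.IsRoot a)
    (h' : (derivative p).IsRoot a) : (X - C a) ^ 2 ∣ p := by
  rcases eq_or_ne p 0 with rfl | hp
  · exact dvd_zero _
  · exact (le_rootMultiplicity_iff hp).1 ((one_lt_rootMultiplicity_iff_isRoot hp).2 ⟨h, h'⟩)

theorem eval_derivative_derivative_sq_X_sub_C_mul (S : K[X]) (a : K) :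
    (derivative (derivative ((X - C a) ^ 2 * S))).eval a = 2 * S.eval a := by
  simp only [derivative_mul, derivative_sq, derivative_add, derivative_sub, derivative_X,
    derivative_C, sub_zero, eval_add, eval_mul, eval_pow, eval_sub, eval_X, eval_C, eval_one,
    sub_self]
  ring

theorem eq_C_leadingCoeff_mul_nodal {ι : Type*} {s : Finset ι} {v : ι → K} {p : K[X]}
    (hv : InjOn v s) (hp : p.degree = #s) (hroot : ∀ i ∈ s, p.eval (v i) = 0) :
    p = C p.leadingCoeff * nodal s v := by
  have hlc : p.leadingCoeff ≠ 0 := leadingCoeff_ne_zero.2 (ne_zero_of_coe_le_degree hp.ge)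
  refine eq_of_degree_le_of_eval_index_eq s hv hp.le ?_ ?_ fun i hi => ?_
  · rw [degree_C_mul hlc, degree_nodal, hp]
  · rw [leadingCoeff_C_mul_of_isUnit hlc.isUnit, nodal_monic.leadingCoeff, mul_one]
  · rw [eval_mul, eval_nodal_at_node hi, mul_zero, hroot i hi]

theorem sum_eval_div_eval_derivative_nodal {ι : Type*} [DecidableEq ι] {s : Finset ι}
    {v : ι → K} {N : K[X]} (hv : InjOn v s) (hN : N.degree < #s) :
    ∑ i ∈ s, N.eval (v i) / (derivative (nodal s v)).eval (v i) = N.coeff (#s - 1) := by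
  rw [coeff_eq_sum hv hN]
  refine Finset.sum_congr rfl fun i hi => ?_
  rw [eval_nodal_derivative_eval_node_eq hi, eval_nodal]

theorem eval_derivative_nodal_ne_zero {ι : Type*} [DecidableEq ι] {s : Finset ι}
    {v : ι → K} {i : ι} (hv : InjOn v s) (hi : i ∈ s) :
    (derivative (nodal s v)).eval (v i) ≠ 0 := by
  simpa [nodalWeight_eq_eval_derivative_nodal hi] using nodalWeight_ne_zero hv hi

end Field

section NormedField

variable {𝕜 : Type*} [NormedField 𝕜]

theorem tendsto_sub_mul_eval_div_eval {N D : 𝕜[X]} {a : 𝕜} (ha : D.IsRoot a)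
    (hD : (derivative D).eval a ≠ 0) :
    Tendsto (fun z => (z - a) * (N.eval z / D.eval z)) (𝓝[≠] a)
      (𝓝 (N.eval a / (derivative D).eval a)) := by
  obtain ⟨D₁, rfl⟩ := dvd_iff_isRoot.2 ha
  have hD₁ : (derivative ((X - C a) * D₁)).eval a = D₁.eval a := by simp
  rw [hD₁] at hD ⊢
  refine ((N.continuous.continuousAt.div D₁.continuous.continuousAt hD).tendsto.mono_left
    nhdsWithin_le_nhds).congr' ?_
  filter_upwards [self_mem_nhdsWithin] with z hz
  rw [Pi.div_apply, eval_mul, eval_sub, eval_X, eval_C, ← mul_div_assoc,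
    mul_div_mul_left _ _ (sub_ne_zero.2 hz)]

theorem tendsto_eval_div_eval_cobounded {A B : 𝕜[X]} (hB : B ≠ 0)
    (h : A.natDegree ≤ B.natDegree) :
    Tendsto (fun z => A.eval z / B.eval z) (cobounded 𝕜)
      (𝓝 (A.coeff B.natDegree / B.leadingCoeff)) := by
  set c := A.coeff B.natDegree / B.leadingCoeff
  have hlc : B.leadingCoeff ≠ 0 := leadingCoeff_ne_zero.2 hB
  have hR : (A - C c * B).degree < B.degree := by
    rw [degree_eq_natDegree hB, degree_lt_iff_coeff_zero]
    intro k hk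
    rcases hk.eq_or_lt with rfl | hk
    · simp [c, coeff_C_mul, hlc]
    · simp [coeff_C_mul, coeff_eq_zero_of_natDegree_lt hk,
        coeff_eq_zero_of_natDegree_lt (h.trans_lt hk)]
  have hlim := ((isLittleO_cobounded_of_degree_lt hR).tendsto_div_nhds_zero).const_add c
  rw [add_zero] at hlim
  refine hlim.congr' ?_
  filter_upwards [Bornology.le_cofinite 𝕜 (eventually_cofinite_not_isRoot hB)] with z hz
  rw [eval_sub, eval_mul, eval_C, sub_div, mul_div_cancel_right₀ _ hz, add_sub_cancel]

end NormedField

end Polynomial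

section RationalResidues

variable {m : ℕ} {r : Fin (m + 1) → ℂ} {N : ℂ[X]} {c : ℂ} {f : ℂ → ℂ} {s : Set ℂ}

theorem simpleRes_eq_of_eqOn_div_nodal (hr : Injective r) (hc : c ≠ 0) (hs : s.Finite)
    (hrs : ∀ k, r k ∉ s) (hf : EqOn f (fun z => N.eval z / (C c * nodal univ r).eval z) sᶜ)
    (k : Fin (m + 1)) :
    simpleRes f (r k) = N.eval (r k) / (c * (derivative (nodal univ r)).eval (r k)) := by
  have hroot : (C c * nodal univ r).IsRoot (r k) := by
    simp [IsRoot, eval_nodal_at_node (mem_univ k)]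
  have hderiv : (derivative (C c * nodal univ r)).eval (r k) ≠ 0 := by
    simpa [hc] using eval_derivative_nodal_ne_zero hr.injOn (mem_univ k)
  have hnear : ∀ᶠ z in 𝓝[≠] r k, N.eval z / (C c * nodal univ r).eval z = f z := by
    filter_upwards [mem_nhdsWithin_of_mem_nhds (hs.isClosed.isOpen_compl.mem_nhds (hrs k))]
      with z hz using (hf hz).symm
  have hlim := (tendsto_sub_mul_eval_div_eval (N := N) hroot hderiv).congr'
    (hnear.mono fun z hz => by rw [hz])
  rw [derivative_C_mul, eval_mul, eval_C] at hlim
  exact hlim.limUnder_eq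

theorem sum_simpleRes_eq_of_eqOn_div_nodal (hr : Injective r) (hc : c ≠ 0)
    (hN : N.natDegree ≤ m) (hs : s.Finite) (hrs : ∀ k, r k ∉ s)
    (hf : EqOn f (fun z => N.eval z / (C c * nodal univ r).eval z) sᶜ) :
    ∑ k, simpleRes f (r k) = N.coeff m / c := by
  have hNdeg : N.degree < #(univ : Finset (Fin (m + 1))) := by
    rw [card_univ, Fintype.card_fin]
    exact (degree_le_of_natDegree_le hN).trans_lt (WithBot.coe_lt_coe.2 m.lt_succ_self)
  simp_rw [simpleRes_eq_of_eqOn_div_nodal hr hc hs hrs hf, div_mul_eq_div_div_swap, ← sum_div,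
    sum_eval_div_eval_derivative_nodal hr.injOn hNdeg, card_univ, Fintype.card_fin,
    Nat.add_sub_cancel]

theorem resInf_eq_of_eqOn_div_nodal (hc : c ≠ 0) (hN : N.natDegree ≤ m) (hs : s.Finite)
    (hf : EqOn f (fun z => N.eval z / (C c * nodal univ r).eval z) sᶜ) :
    resInf f = -(N.coeff m / c) := by
  have hD : C c * nodal univ r ≠ 0 := mul_ne_zero (C_ne_zero.2 hc) nodal_ne_zero
  have hDdeg : (C c * nodal univ r).natDegree = m + 1 := by
    rw [natDegree_C_mul hc, natDegree_nodal, card_univ, Fintype.card_fin]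
  have hXN : (X * N).natDegree ≤ (C c * nodal univ r).natDegree :=
    natDegree_mul_le.trans (by rw [natDegree_X, hDdeg]; omega)
  have hlim := tendsto_eval_div_eval_cobounded hD hXN
  rw [hDdeg, coeff_X_mul, leadingCoeff_C_mul_of_isUnit hc.isUnit, nodal_monic.leadingCoeff,
    mul_one] at hlim
  have hfar :
      ∀ᶠ z in cobounded ℂ, (X * N).eval z / (C c * nodal univ r).eval z = z * f z := by
    filter_upwards [Bornology.le_cofinite ℂ hs.compl_mem_cofinite] with z hz
    rw [hf hz, eval_mul, eval_X, mul_div_assoc]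
  rw [resInf, (hlim.congr' hfar).limUnder_eq]

end RationalResidues

noncomputable def lamPoly (n : ℕ) (v : ℕ → ℂ) : ℂ[X] :=
  X ^ (n + 1) + ∑ i ∈ range n, C (v (i + 1)) * X ^ i

noncomputable def lamDerivNum (n : ℕ) (v : ℕ → ℂ) (u w : ℂ) : ℂ[X] :=
  derivative (lamPoly n v) * (X - C w) ^ 2 - C u

noncomputable def lamSubNum (n : ℕ) (v : ℕ → ℂ) (u w a : ℂ) : ℂ[X] :=
  (lamPoly n v - C ((lamPoly n v).eval a)) * (X - C w) * C (a - w) - C u * (X - C a)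

section Lam

variable {n : ℕ} {v : ℕ → ℂ} {u w a : ℂ}

theorem lam_eq_eval_add (z : ℂ) : lam n v u w z = (lamPoly n v).eval z + u / (z - w) := by
  simp [lam, lamPoly, eval_finsetSum]

theorem lam_sub_lam {z : ℂ} (hz : z ≠ w) (ha : a ≠ w) :
    lam n v u w z - lam n v u w a = (lamSubNum n v u w a).eval z / ((z - w) * (a - w)) := by
  have hz' : z - w ≠ 0 := sub_ne_zero.2 hz
  have ha' : a - w ≠ 0 := sub_ne_zero.2 ha
  simp only [lam_eq_eval_add, lamSubNum, eval_sub, eval_mul, eval_C, eval_X]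
  field_simp
  ring

theorem deriv_lam {z : ℂ} (hz : z ≠ w) :
    deriv (lam n v u w) z = (lamDerivNum n v u w).eval z / (z - w) ^ 2 := by
  have hz' : z - w ≠ 0 := sub_ne_zero.2 hz
  have hpole : HasDerivAt (fun p => u / (p - w)) (-(u / (z - w) ^ 2)) z := by
    simpa [div_eq_mul_inv] using (((hasDerivAt_id z).sub_const w).inv hz').const_mul u
  rw [show lam n v u w = fun p => (lamPoly n v).eval p + u / (p - w) from funext lam_eq_eval_add,
    ((lamPoly n v).hasDerivAt z |>.fun_add hpole).deriv, lamDerivNum]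
  simp only [eval_sub, eval_mul, eval_pow, eval_X, eval_C]
  field_simp
  ring

theorem degree_lamPoly_sub_X_pow_lt :
    (∑ i ∈ range n, C (v (i + 1)) * X ^ i).degree < ↑(n + 1) :=
  (degree_sum_le _ _).trans_lt <| (Finset.sup_lt_iff (WithBot.bot_lt_coe _)).2 fun i hi =>
    (degree_C_mul_X_pow_le _ _).trans_lt <| by
      rw [Finset.mem_range] at hi
      exact_mod_cast hi.trans n.lt_succ_self

theorem lamPoly_monic : (lamPoly n v).Monic :=
  monic_X_pow_add degree_lamPoly_sub_X_pow_lt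

theorem natDegree_lamPoly : (lamPoly n v).natDegree = n + 1 := by
  rw [lamPoly, natDegree_add_eq_left_of_degree_lt, natDegree_X_pow]
  rw [degree_X_pow]
  exact degree_lamPoly_sub_X_pow_lt

theorem natDegree_derivative_lamPoly_mul :
    (derivative (lamPoly n v) * (X - C w) ^ 2).natDegree = n + 2 := by
  have hP : derivative (lamPoly n v) ≠ 0 := by
    rw [Ne, derivative_eq_zero, natDegree_lamPoly]; omega
  rw [natDegree_mul hP (pow_ne_zero _ (X_sub_C_ne_zero w)), natDegree_derivative,
    natDegree_lamPoly, natDegree_pow, natDegree_X_sub_C]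
  omega

theorem leadingCoeff_derivative_lamPoly_mul :
    (derivative (lamPoly n v) * (X - C w) ^ 2).leadingCoeff = (n : ℂ) + 1 := by
  rw [leadingCoeff_mul, leadingCoeff_derivative, lamPoly_monic.leadingCoeff, natDegree_lamPoly,
    ((monic_X_sub_C w).pow 2).leadingCoeff]
  push_cast
  ring

theorem degree_derivative_lamPoly_mul :
    (derivative (lamPoly n v) * (X - C w) ^ 2).degree = ↑(n + 2) := by
  rw [degree_eq_natDegree, natDegree_derivative_lamPoly_mul]
  rw [← leadingCoeff_ne_zero, leadingCoeff_derivative_lamPoly_mul]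
  exact Nat.cast_add_one_ne_zero n

theorem degree_C_lt_degree_derivative_lamPoly_mul :
    (C u).degree < (derivative (lamPoly n v) * (X - C w) ^ 2).degree := by
  rw [degree_derivative_lamPoly_mul]
  exact degree_C_le.trans_lt (by exact_mod_cast Nat.succ_pos _)

theorem degree_lamDerivNum : (lamDerivNum n v u w).degree = ↑(n + 2) := by
  rw [lamDerivNum, degree_sub_eq_left_of_degree_lt degree_C_lt_degree_derivative_lamPoly_mul,
    degree_derivative_lamPoly_mul]

theorem leadingCoeff_lamDerivNum : (lamDerivNum n v u w).leadingCoeff = (n : ℂ) + 1 := by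
  rw [lamDerivNum, leadingCoeff_sub_of_degree_lt degree_C_lt_degree_derivative_lamPoly_mul,
    leadingCoeff_derivative_lamPoly_mul]

theorem lamDerivNum_eq_C_mul_nodal {r : Fin (n + 2) → ℂ} (hr : Injective r)
    (hw : ∀ k, r k ≠ w) (hcrit : ∀ k, deriv (lam n v u w) (r k) = 0) :
    lamDerivNum n v u w = C ((n : ℂ) + 1) * nodal univ r := by
  rw [← leadingCoeff_lamDerivNum (v := v) (u := u) (w := w)]
  refine eq_C_leadingCoeff_mul_nodal hr.injOn
    (by rw [degree_lamDerivNum, card_univ, Fintype.card_fin]) fun k _ => ?_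
  have h := hcrit k
  rwa [deriv_lam (hw k), div_eq_zero_iff, or_iff_left (pow_ne_zero _ (sub_ne_zero.2 (hw k)))] at h

end Lam

section LamSub

variable {n : ℕ} {v : ℕ → ℂ} {u w a : ℂ}

theorem lamSubNum_isRoot_self : (lamSubNum n v u w a).IsRoot a := by
  simp [lamSubNum]

theorem eval_derivative_lamSubNum_self :
    (derivative (lamSubNum n v u w a)).eval a = (lamDerivNum n v u w).eval a := by
  simp only [lamSubNum, lamDerivNum, derivative_mul, derivative_sub, derivative_X, derivative_C,
    sub_zero, eval_add, eval_mul, eval_sub, eval_pow, eval_X, eval_C, eval_one, sub_self]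
  ring

theorem eval_derivative_derivative_lamSubNum_self :
    (derivative (derivative (lamSubNum n v u w a))).eval a =
      (derivative (lamDerivNum n v u w)).eval a := by
  simp only [lamSubNum, lamDerivNum, derivative_mul, derivative_sub, derivative_add, derivative_sq,
    derivative_X, derivative_C, sub_zero, eval_add, eval_mul, eval_sub, eval_pow, eval_X, eval_C,
    eval_one, eval_zero, sub_self, derivative_one]
  ring

theorem monic_lamPoly_sub_C (c : ℂ) : (lamPoly n v - C c).Monic :=
  lamPoly_monic.sub_of_left <| degree_C_le.trans_lt <| by
    rw [degree_eq_natDegree lamPoly_monic.ne_zero, natDegree_lamPoly]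
    exact_mod_cast Nat.succ_pos n

theorem natDegree_lamPoly_sub_C_mul (c : ℂ) :
    ((lamPoly n v - C c) * (X - C w)).natDegree = n + 2 := by
  rw [(monic_lamPoly_sub_C c).natDegree_mul (monic_X_sub_C w), natDegree_sub_C, natDegree_lamPoly,
    natDegree_X_sub_C]

theorem natDegree_lamSubNum_lead (ha : a ≠ w) :
    ((lamPoly n v - C ((lamPoly n v).eval a)) * (X - C w) * C (a - w)).natDegree = n + 2 := by
  rw [natDegree_mul_C (sub_ne_zero.2 ha), natDegree_lamPoly_sub_C_mul]

theorem natDegree_lamSubNum_tail_lt (ha : a ≠ w) :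
    (C u * (X - C a)).natDegree <
      ((lamPoly n v - C ((lamPoly n v).eval a)) * (X - C w) * C (a - w)).natDegree :=
  (natDegree_C_mul_le _ _).trans_lt <| by
    rw [natDegree_X_sub_C, natDegree_lamSubNum_lead ha]
    omega

theorem natDegree_lamSubNum (ha : a ≠ w) : (lamSubNum n v u w a).natDegree = n + 2 := by
  rw [lamSubNum, natDegree_sub_eq_left_of_natDegree_lt (natDegree_lamSubNum_tail_lt ha),
    natDegree_lamSubNum_lead ha]

theorem leadingCoeff_lamSubNum (ha : a ≠ w) : (lamSubNum n v u w a).leadingCoeff = a - w := by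
  rw [lamSubNum, leadingCoeff_sub_of_degree_lt (degree_lt_degree (natDegree_lamSubNum_tail_lt ha)),
    leadingCoeff_mul, ((monic_lamPoly_sub_C _).mul (monic_X_sub_C w)).leadingCoeff,
    leadingCoeff_C, one_mul]

end LamSub

section H1

variable {n : ℕ} {v : ℕ → ℂ} {u w a : ℂ} {S : ℂ[X]}

/-- At `z = a` and at the other roots of `lamDerivNum` both sides vanish, by `x / 0 = 0`. -/
theorem eqOn_lam_sub_div (ha : a ≠ w) (hQa : (lamDerivNum n v u w).eval a = 0)
    (hS : lamSubNum n v u w a = (X - C a) ^ 2 * S) :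
    EqOn (fun z => (lam n v u w z - lam n v u w a) / (deriv (lam n v u w) z * (z - a) ^ 2))
      (fun z => ((X - C w) * S).eval z / (C (a - w) * lamDerivNum n v u w).eval z) {w}ᶜ := by
  intro z hz
  rcases eq_or_ne z a with rfl | hza
  · simp [hQa]
  have hzw : z - w ≠ 0 := sub_ne_zero.2 hz
  have hza' : z - a ≠ 0 := sub_ne_zero.2 hza
  dsimp only
  rw [lam_sub_lam hz ha, deriv_lam hz, hS]
  simp only [eval_mul, eval_pow, eval_sub, eval_X, eval_C]
  field_simp

theorem natDegree_X_sub_C_mul_of_lamSubNum_eq (ha : a ≠ w)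
    (hS : lamSubNum n v u w a = (X - C a) ^ 2 * S) :
    ((X - C w) * S).natDegree = n + 1 := by
  have hS0 : S ≠ 0 := by
    rintro rfl
    simpa [hS] using natDegree_lamSubNum (n := n) (v := v) (u := u) ha
  have h := natDegree_lamSubNum (n := n) (v := v) (u := u) ha
  rw [hS, ((monic_X_sub_C a).pow 2).natDegree_mul' hS0, natDegree_pow, natDegree_X_sub_C] at h
  rw [(monic_X_sub_C w).natDegree_mul' hS0, natDegree_X_sub_C]
  omega

theorem coeff_X_sub_C_mul_of_lamSubNum_eq (ha : a ≠ w)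
    (hS : lamSubNum n v u w a = (X - C a) ^ 2 * S) :
    ((X - C w) * S).coeff (n + 1) = a - w := by
  have h := leadingCoeff_lamSubNum (n := n) (v := v) (u := u) ha
  rw [hS, leadingCoeff_mul, ((monic_X_sub_C a).pow 2).leadingCoeff, one_mul] at h
  rw [← natDegree_X_sub_C_mul_of_lamSubNum_eq ha hS, ← leadingCoeff, leadingCoeff_mul,
    (monic_X_sub_C w).leadingCoeff, one_mul, h]

theorem two_mul_eval_of_lamSubNum_eq (hS : lamSubNum n v u w a = (X - C a) ^ 2 * S) :
    2 * S.eval a = (derivative (lamDerivNum n v u w)).eval a := by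
  rw [← eval_derivative_derivative_sq_X_sub_C_mul, ← hS,
    eval_derivative_derivative_lamSubNum_self]

theorem eval_div_eq_half_of_lamSubNum_eq {r : Fin (n + 2) → ℂ} {i : Fin (n + 2)}
    (hr : Injective r) (hQ : lamDerivNum n v u w = C ((n : ℂ) + 1) * nodal univ r)
    (hw : r i ≠ w) (hS : lamSubNum n v u w (r i) = (X - C (r i)) ^ 2 * S) :
    ((X - C w) * S).eval (r i) /
      ((r i - w) * ((n : ℂ) + 1) * (derivative (nodal univ r)).eval (r i)) = 1 / 2 := by
  have h2 := two_mul_eval_of_lamSubNum_eq hS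
  rw [hQ, derivative_C_mul, eval_mul, eval_C] at h2
  have hiw : r i - w ≠ 0 := sub_ne_zero.2 hw
  have hnodal := eval_derivative_nodal_ne_zero hr.injOn (mem_univ i)
  rw [eval_mul, eval_sub, eval_X, eval_C]
  field_simp
  linear_combination h2

end H1

theorem residue_theorem_h1_general
    (n : ℕ) (v : ℕ → ℂ) (u w : ℂ)
    (r : Fin (n + 2) → ℂ) (hinj : Function.Injective r)
    (hw : ∀ k, r k ≠ w)
    (hcrit : ∀ k, deriv (lam n v u w) (r k) = 0)
    (i : Fin (n + 2)) :
    (∑ k : Fin (n + 2),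
        simpleRes (fun z => (lam n v u w z - lam n v u w (r i)) /
          (deriv (lam n v u w) z * (z - r i) ^ 2)) (r k))
      = - resInf (fun z => (lam n v u w z - lam n v u w (r i)) /
          (deriv (lam n v u w) z * (z - r i) ^ 2))
    ∧ resInf (fun z => (lam n v u w z - lam n v u w (r i)) /
          (deriv (lam n v u w) z * (z - r i) ^ 2))
      = -(((1 : ℂ) - (n : ℂ)) / (2 * ((n : ℂ) + 1)))
        - simpleRes (fun z => (lam n v u w z - lam n v u w (r i)) /
            (deriv (lam n v u w) z * (z - r i) ^ 2)) (r i) := by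
  have hQ := lamDerivNum_eq_C_mul_nodal hinj hw hcrit
  have hQa : (lamDerivNum n v u w).eval (r i) = 0 := by
    rw [hQ, eval_mul, eval_nodal_at_node (mem_univ i), mul_zero]
  obtain ⟨S, hS⟩ := sq_X_sub_C_dvd_of_isRoot_derivative lamSubNum_isRoot_self
    (by rwa [IsRoot, eval_derivative_lamSubNum_self])
  have hf := eqOn_lam_sub_div (hw i) hQa hS
  rw [hQ, ← mul_assoc, ← C_mul] at hf
  have hiw : r i - w ≠ 0 := sub_ne_zero.2 (hw i)
  have hc : (r i - w) * ((n : ℂ) + 1) ≠ 0 := mul_ne_zero hiw (Nat.cast_add_one_ne_zero n)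
  have hN := (natDegree_X_sub_C_mul_of_lamSubNum_eq (hw i) hS).le
  rw [sum_simpleRes_eq_of_eqOn_div_nodal hinj hc hN (finite_singleton w) hw hf,
    resInf_eq_of_eqOn_div_nodal hc hN (finite_singleton w) hf,
    simpleRes_eq_of_eqOn_div_nodal hinj hc (finite_singleton w) hw hf i,
    eval_div_eq_half_of_lamSubNum_eq hinj hQ (hw i) hS,
    coeff_X_sub_C_mul_of_lamSubNum_eq (hw i) hS]
  constructor
  · ring
  · field_simp
    ring

/-- for `h₁(z) = (λ(z)-λ(r_i))/(λ'(z)(z-r_i)²)`, the sum of the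
residues of `h₁` over all its finite poles (the points `r_k`) equals the
negative of its residue at infinity, and the residue at infinity equals
`-(1-n)/(2(n+1))` minus the residue of `h₁` at `z = r_i`. -/
theorem residue_theorem_h1
    (n : ℕ) (v : ℕ → ℂ) (u w : ℂ) (hu : u ≠ 0)
    (r : Fin (n + 2) → ℂ) (hinj : Function.Injective r)
    (hw : ∀ k, r k ≠ w)
    (hcrit : ∀ k, deriv (lam n v u w) (r k) = 0)
    (i : Fin (n + 2)) :
    (∑ k : Fin (n + 2),
        simpleRes (fun z => (lam n v u w z - lam n v u w (r i)) /
          (deriv (lam n v u w) z * (z - r i) ^ 2)) (r k))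
      = - resInf (fun z => (lam n v u w z - lam n v u w (r i)) /
          (deriv (lam n v u w) z * (z - r i) ^ 2))
    ∧ resInf (fun z => (lam n v u w z - lam n v u w (r i)) /
          (deriv (lam n v u w) z * (z - r i) ^ 2))
      = -(((1 : ℂ) - (n : ℂ)) / (2 * ((n : ℂ) + 1)))
        - simpleRes (fun z => (lam n v u w z - lam n v u w (r i)) /
            (deriv (lam n v u w) z * (z - r i) ^ 2)) (r i) :=
  residue_theorem_h1_general n v u w r hinj hw hcrit i
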